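/- (Appendix C continuity claim, achievability side.) Fix ε ∈ (0,1) and λ > 0. Define, for t ≥ 0, G(t) = min over q,v ∈ Δ satisfying D((1−ε)q + εv ‖ P₁) ≤ t of D(q‖P₀). Then lim_{δ→0⁺} G(λ+δ) = G(λ). -/

import Mathlib

open scoped BigOperators ENNReal Classical
open Filter

noncomputable section

/-- The set of probability distributions on a finite alphabet. -/
def simplex (𝒳 : Type*) [Fintype 𝒳] : Set (𝒳 → ℝ) :=
  {p | (∀ x, 0 ≤ p x) ∧ ∑ x, p x = 1}

/-- Kullback–Leibler divergence, with values in `[0,∞]`. -/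
def KL {𝒳 : Type*} [Fintype 𝒳] (p q : 𝒳 → ℝ) : ℝ≥0∞ :=
  if ∀ x, q x = 0 → p x = 0 then
    ENNReal.ofReal (∑ x, p x * Real.log (p x / q x))
  else ⊤

/-- KL ball of radius `r` around `p`. -/
def BKL {𝒳 : Type*} [Fintype 𝒳] (p : 𝒳 → ℝ) (r : ℝ) : Set (𝒳 → ℝ) :=
  {q | q ∈ simplex 𝒳 ∧ KL q p ≤ ENNReal.ofReal r}

/-- Mixture `(1-a) p + a q`. -/
def mix {𝒳 : Type*} (a : ℝ) (p q : 𝒳 → ℝ) : 𝒳 → ℝ :=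
  fun x => (1 - a) * p x + a * q x

/-- Binary KL divergence `D₂(ρ‖ε)`. -/
def D2 (ρ ε : ℝ) : ℝ≥0∞ :=
  KL (fun b : Bool => if b then ρ else 1 - ρ) (fun b : Bool => if b then ε else 1 - ε)

/-- Total variation distance. -/
def dTV {𝒳 : Type*} [Fintype 𝒳] (p q : 𝒳 → ℝ) : ℝ :=
  (∑ x, |p x - q x|) / 2

/-- Empirical type of a string. -/
def typeOf {𝒳 : Type*} [Fintype 𝒳] [DecidableEq 𝒳] {n : ℕ} (x : Fin n → 𝒳) : 𝒳 → ℝ :=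
  fun a => ((Finset.univ.filter fun i => x i = a).card : ℝ) / n

/-- i.i.d. probability of a string. -/
def iid {𝒳 : Type*} [Fintype 𝒳] (P : 𝒳 → ℝ) {n : ℕ} (x : Fin n → 𝒳) : ℝ :=
  ∏ i, P (x i)

/-- Probability of `z` under i.i.d. Bernoulli(ε). -/
def berW (ε : ℝ) {n : ℕ} (z : Fin n → Bool) : ℝ :=
  ∏ i, if z i then ε else 1 - ε

/-- Hamming weight. -/
def wt {n : ℕ} (z : Fin n → Bool) : ℕ :=
  (Finset.univ.filter fun i => z i = true).card

/-- Probability of `z` under the uniform distribution on weight-⌈nε⌉ binary vectors. -/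
def unifW (ε : ℝ) {n : ℕ} (z : Fin n → Bool) : ℝ :=
  if wt z = Nat.ceil ((n : ℝ) * ε) then
    (1 : ℝ) / ((Finset.univ.filter fun z' : Fin n → Bool => wt z' = Nat.ceil ((n : ℝ) * ε)).card : ℝ)
  else 0

/-- `liminf -(1/n) log E(n) ≥ l` (in the extended reals). -/
def ExpLB (E : ℕ → ℝ) (l : ℝ) : Prop :=
  (l : EReal) ≤ Filter.liminf (fun n : ℕ => ((-(Real.log (E n)) / n : ℝ) : EReal)) Filter.atTop

/-- `G(t) = min_{q,v ∈ Δ : D((1-ε)q+εv‖P1) ≤ t} D(q‖P0)`. -/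
def Gfw {𝒳 : Type*} [Fintype 𝒳] (P0 P1 : 𝒳 → ℝ) (ε t : ℝ) : ℝ≥0∞ :=
  ⨅ q ∈ simplex 𝒳, ⨅ v ∈ simplex 𝒳,
    ⨅ (_ : KL (mix ε q v) P1 ≤ ENNReal.ofReal t), KL q P0

open Real Set

def klSum {𝒳 : Type*} [Fintype 𝒳] (p s : 𝒳 → ℝ) : ℝ :=
  ∑ x, p x * log (p x / s x)

section KLSum

variable {𝒳 : Type*} [Fintype 𝒳]

lemma KL_eq_ofReal_klSum (p : 𝒳 → ℝ) {s : 𝒳 → ℝ} (hs : ∀ x, 0 < s x) :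
    KL p s = ENNReal.ofReal (klSum p s) :=
  if_pos fun x hx => absurd hx (hs x).ne'

lemma klSum_self (s : 𝒳 → ℝ) : klSum s s = 0 :=
  Finset.sum_eq_zero fun x _ => by
    rcases eq_or_ne (s x) 0 with h | h
    · simp [h]
    · rw [div_self h, log_one, mul_zero]

lemma convexOn_mul_log_div {c : ℝ} (hc : 0 < c) :
    ConvexOn ℝ (Ici 0) fun u : ℝ => u * log (u / c) := by
  refine (convexOn_mul_log.add (((-log c) • LinearMap.id : ℝ →ₗ[ℝ] ℝ).convexOn
    (convex_Ici 0))).congr fun u (hu : 0 ≤ u) => ?_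
  rcases hu.eq_or_lt with rfl | hu
  · simp
  · simp only [Pi.add_apply, LinearMap.smul_apply, LinearMap.id_apply, smul_eq_mul,
      log_div hu.ne' hc.ne']
    ring

lemma klSum_mix_le {θ : ℝ} (hθ0 : 0 ≤ θ) (hθ1 : θ ≤ 1) {p r s : 𝒳 → ℝ}
    (hp : ∀ x, 0 ≤ p x) (hr : ∀ x, 0 ≤ r x) (hs : ∀ x, 0 < s x) :
    klSum (mix θ p r) s ≤ (1 - θ) * klSum p s + θ * klSum r s := by
  simp only [klSum, Finset.mul_sum, ← Finset.sum_add_distrib]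
  exact Finset.sum_le_sum fun x _ =>
    (convexOn_mul_log_div (hs x)).2 (hp x) (hr x) (by linarith) hθ0 (by ring)

lemma klSum_mix_self_le {θ : ℝ} (hθ0 : 0 ≤ θ) (hθ1 : θ ≤ 1) {p s : 𝒳 → ℝ}
    (hp : ∀ x, 0 ≤ p x) (hs : ∀ x, 0 < s x) :
    klSum (mix θ p s) s ≤ (1 - θ) * klSum p s := by
  simpa [klSum_self] using klSum_mix_le hθ0 hθ1 hp (fun x => (hs x).le) hs

end KLSum

lemma mix_mem_simplex {𝒳 : Type*} [Fintype 𝒳] {a : ℝ} (ha0 : 0 ≤ a) (ha1 : a ≤ 1)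
    {p q : 𝒳 → ℝ} (hp : p ∈ simplex 𝒳) (hq : q ∈ simplex 𝒳) :
    mix a p q ∈ simplex 𝒳 := by
  refine ⟨fun x => ?_, ?_⟩
  · have := hp.1 x
    have := hq.1 x
    unfold mix
    nlinarith
  · simp only [mix, Finset.sum_add_distrib, ← Finset.mul_sum, hp.2, hq.2]
    ring

lemma mix_mix_mix_right {𝒳 : Type*} (a b : ℝ) (p q r : 𝒳 → ℝ) :
    mix a (mix b p r) (mix b q r) = mix b (mix a p q) r := by
  funext x
  simp only [mix]
  ring

section Gfw

variable {𝒳 : Type*} [Fintype 𝒳] {P0 P1 : 𝒳 → ℝ} {ε : ℝ}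

lemma Gfw_le_KL {t : ℝ} {q v : 𝒳 → ℝ} (hq : q ∈ simplex 𝒳) (hv : v ∈ simplex 𝒳)
    (hqv : KL (mix ε q v) P1 ≤ ENNReal.ofReal t) :
    Gfw P0 P1 ε t ≤ KL q P0 :=
  iInf₂_le_of_le q hq (iInf₂_le_of_le v hv (iInf_le_of_le hqv le_rfl))

lemma Gfw_antitone : Antitone (Gfw P0 P1 ε) := fun _ _ htt' =>
  le_iInf₂ fun _ hq => le_iInf₂ fun _ hv => le_iInf fun hqv =>
    Gfw_le_KL hq hv (hqv.trans (ENNReal.ofReal_le_ofReal htt'))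

lemma Gfw_ne_top (hP1 : P1 ∈ simplex 𝒳) (hfs0 : ∀ x, 0 < P0 x) (hfs1 : ∀ x, 0 < P1 x)
    (t : ℝ) : Gfw P0 P1 ε t ≠ ⊤ := by
  have hfeas : KL (mix ε P1 P1) P1 ≤ ENNReal.ofReal t := by
    have : mix ε P1 P1 = P1 := funext fun x => by simp only [mix]; ring
    simp [this, KL_eq_ofReal_klSum _ hfs1, klSum_self]
  exact ne_top_of_le_ne_top (by simp [KL_eq_ofReal_klSum _ hfs0]) (Gfw_le_KL hP1 hP1 hfeas)

/-- Moving a feasible pair for the level `lam + δ` towards `P1` by the weight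
`δ / (lam + δ)` makes it feasible for the level `lam`, at a cost of at most
`δ / (lam + δ) · D(P1‖P0)`. -/
lemma Gfw_sub_le_Gfw_add (hP1 : P1 ∈ simplex 𝒳) (hfs0 : ∀ x, 0 < P0 x)
    (hfs1 : ∀ x, 0 < P1 x) (hε : 0 < ε) (hε1 : ε < 1) {lam δ : ℝ} (hlam : 0 < lam)
    (hδ : 0 < δ) :
    Gfw P0 P1 ε lam - ENNReal.ofReal (δ / (lam + δ) * klSum P1 P0) ≤
      Gfw P0 P1 ε (lam + δ) := by
  set θ := δ / (lam + δ)
  have hθ0 : 0 ≤ θ := by positivity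
  have hθ1 : θ ≤ 1 := (div_le_one (by positivity)).2 (by linarith)
  refine le_iInf₂ fun q hq => le_iInf₂ fun v hv => le_iInf fun hqv => ?_
  rw [tsub_le_iff_right]
  have hm := mix_mem_simplex hε.le hε1.le hq hv
  have hfeas : KL (mix ε (mix θ q P1) (mix θ v P1)) P1 ≤ ENNReal.ofReal lam := by
    rw [KL_eq_ofReal_klSum _ hfs1, mix_mix_mix_right]
    rw [KL_eq_ofReal_klSum _ hfs1, ENNReal.ofReal_le_ofReal_iff (by positivity)] at hqv
    refine ENNReal.ofReal_le_ofReal ((klSum_mix_self_le hθ0 hθ1 hm.1 hfs1).trans ?_)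
    calc (1 - θ) * klSum (mix ε q v) P1 ≤ (1 - θ) * (lam + δ) := by gcongr
      _ = lam := by rw [sub_mul, one_mul, div_mul_cancel₀ _ (by positivity)]; ring
  have hcost : klSum (mix θ q P1) P0 ≤ (1 - θ) * klSum q P0 + θ * klSum P1 P0 :=
    klSum_mix_le hθ0 hθ1 hq.1 hP1.1 hfs0
  -- Gibbs' inequality is not available for `klSum q P0`, so its sign is split on.
  have hshrink : ENNReal.ofReal ((1 - θ) * klSum q P0) ≤ ENNReal.ofReal (klSum q P0) :=
    ENNReal.ofReal_le_ofReal_iff'.2 <| by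
      rcases le_or_gt (klSum q P0) 0 with h | h
      · exact Or.inr (mul_nonpos_of_nonneg_of_nonpos (by linarith) h)
      · exact Or.inl (by nlinarith)
  calc Gfw P0 P1 ε lam ≤ KL (mix θ q P1) P0 :=
        Gfw_le_KL (mix_mem_simplex hθ0 hθ1 hq hP1) (mix_mem_simplex hθ0 hθ1 hv hP1) hfeas
    _ ≤ ENNReal.ofReal ((1 - θ) * klSum q P0) + ENNReal.ofReal (θ * klSum P1 P0) := by
        rw [KL_eq_ofReal_klSum _ hfs0]
        exact (ENNReal.ofReal_le_ofReal hcost).trans ENNReal.ofReal_add_le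
    _ ≤ KL q P0 + ENNReal.ofReal (θ * klSum P1 P0) := by
        rw [KL_eq_ofReal_klSum _ hfs0]
        gcongr

end Gfw

theorem appendixC_continuity_achievability_general {𝒳 : Type*} [Fintype 𝒳]
    (P0 P1 : 𝒳 → ℝ) (hP1 : P1 ∈ simplex 𝒳)
    (hfs0 : ∀ x, 0 < P0 x) (hfs1 : ∀ x, 0 < P1 x)
    {ε lam : ℝ} (hε : 0 < ε) (hε1 : ε < 1) (hlam : 0 < lam) :
    Filter.Tendsto (fun δ : ℝ => Gfw P0 P1 ε (lam + δ))
      (nhdsWithin 0 (Set.Ioi 0)) (nhds (Gfw P0 P1 ε lam)) := by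
  have hgap : Tendsto (fun δ : ℝ => ENNReal.ofReal (δ / (lam + δ) * klSum P1 P0))
      (nhdsWithin 0 (Ioi 0)) (nhds 0) := by
    have hcont : ContinuousAt (fun δ : ℝ => ENNReal.ofReal (δ / (lam + δ) * klSum P1 P0)) 0 :=
      ENNReal.continuous_ofReal.continuousAt.comp <|
        (continuousAt_id.div (by fun_prop) (by simpa using hlam.ne')).mul continuousAt_const
    simpa using hcont.tendsto.mono_left nhdsWithin_le_nhds
  have hlower := ENNReal.Tendsto.sub tendsto_const_nhds hgap
    (Or.inl (Gfw_ne_top (ε := ε) (t := lam) hP1 hfs0 hfs1))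
  rw [tsub_zero] at hlower
  refine tendsto_of_tendsto_of_tendsto_of_le_of_le' hlower tendsto_const_nhds ?_ ?_
  · filter_upwards [self_mem_nhdsWithin] with δ hδ
    exact Gfw_sub_le_Gfw_add hP1 hfs0 hfs1 hε hε1 hlam hδ
  · filter_upwards [self_mem_nhdsWithin] with δ (hδ : 0 < δ)
    exact Gfw_antitone (by linarith)

/-- **Appendix C continuity claim (achievability side)**: `G(λ+δ) → G(λ)` as `δ → 0⁺`. -/
theorem appendixC_continuity_achievability {𝒳 : Type*} [Fintype 𝒳] [Nonempty 𝒳]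
    (P0 P1 : 𝒳 → ℝ) (hP0 : P0 ∈ simplex 𝒳) (hP1 : P1 ∈ simplex 𝒳)
    (hfs0 : ∀ x, 0 < P0 x) (hfs1 : ∀ x, 0 < P1 x) (hne : P0 ≠ P1)
    {ε lam : ℝ} (hε : 0 < ε) (hε1 : ε < 1) (hlam : 0 < lam) :
    Filter.Tendsto (fun δ : ℝ => Gfw P0 P1 ε (lam + δ))
      (nhdsWithin 0 (Set.Ioi 0)) (nhds (Gfw P0 P1 ε lam)) :=
  appendixC_continuity_achievability_general P0 P1 hP1 hfs0 hfs1 hε hε1 hlam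

end
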